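/- arXiv:2008.03742 — 4 statements merged into one kernel-verified Lean document; each statement's English description precedes it below -/
import Mathlib

section
/- Let ν > 0 and n ∈ R^3 with |n| < ν, and set ρ := sqrt(ν² - |n|²). For every δ > 0 there exists a constant C > 0, depending only on δ, such that the surface integral over S² of 1/((ν + n·ω)/2) dω is at most C / (ρ^δ · ν^{1-δ}). -/
/-!
Write `n = ‖n‖ • u` with `‖u‖ = 1`. On the sphere `ν + ⟪n, ω⟫ = (ν - ‖n‖) + ‖n‖ / 2 * ‖ω + u‖ ^ 2`,
and weighted AM–GM with weights `δ / 2` and `1 - δ / 2` bounds this from below by a multiple of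
`ρ ^ δ * ν ^ (1 - δ) * ‖ω + u‖ ^ (2 - δ)` as long as `δ ≤ 2`. It remains to bound the integral of
`‖ω + u‖ ^ (δ - 2)` over `S²` uniformly in `u`: by the layer-cake formula this follows from the cap
estimate `σ {ω | ‖ω + u‖ ≤ ε} ≤ 24 ε²`, which compares the cone over the cap with a box of volume
`8 ε²`. Larger `δ` reduce to `δ ≤ 1` because `ρ ≤ ν`.
-/

open MeasureTheory Set
open scoped ENNReal Pointwise RealInnerProductSpace

local notation "ℝ³" => EuclideanSpace ℝ (Fin 3)
local notation "S²" => Metric.sphere (0 : ℝ³) 1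
local notation "σ" => Measure.toSphere (volume : Measure ℝ³)

theorem norm_sub_inner_smul_le {E : Type*} [NormedAddCommGroup E] [InnerProductSpace ℝ E]
    {u : E} (hu : ‖u‖ = 1) (v : E) : ‖v - ⟪v, u⟫ • u‖ ≤ ‖v‖ := by
  have hsq : ‖v - ⟪v, u⟫ • u‖ ^ 2 = ‖v‖ ^ 2 - ⟪v, u⟫ ^ 2 := by
    rw [norm_sub_sq_real, real_inner_smul_right, norm_smul, hu, Real.norm_eq_abs, mul_one, sq_abs]
    ring
  exact pow_le_pow_iff_left₀ (norm_nonneg _) (norm_nonneg _) two_ne_zero |>.mp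
    (by nlinarith [sq_nonneg ⟪v, u⟫])

theorem exists_norm_eq_one_smul_eq {E : Type*} [NormedAddCommGroup E] [NormedSpace ℝ E]
    [Nontrivial E] (n : E) : ∃ u : E, ‖u‖ = 1 ∧ n = ‖n‖ • u := by
  rcases eq_or_ne n 0 with rfl | hn
  · obtain ⟨u, hu⟩ := exists_norm_eq E zero_le_one
    exact ⟨u, hu, by simp⟩
  · exact ⟨‖n‖⁻¹ • n, norm_smul_inv_norm hn, by rw [smul_inv_smul₀ (norm_ne_zero_iff.mpr hn)]⟩

theorem rpow_mul_rpow_one_sub_le_add {p q θ : ℝ} (hp : 0 ≤ p) (hq : 0 ≤ q) (hθ0 : 0 ≤ θ)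
    (hθ1 : θ ≤ 1) : p ^ θ * q ^ (1 - θ) ≤ p + q :=
  (Real.geom_mean_le_arith_mean2_weighted hθ0 (sub_nonneg.2 hθ1) hp hq (by ring)).trans
    (by nlinarith)

theorem sqrt_sq_sub_sq_rpow_mul_le {ν a x δ : ℝ} (hν : 0 < ν) (ha : 0 ≤ a) (haν : a ≤ ν)
    (hx : 0 ≤ x) (hx2 : x ≤ 2) (hδ0 : 0 ≤ δ) (hδ2 : δ ≤ 2) :
    √(ν ^ 2 - a ^ 2) ^ δ * ν ^ (1 - δ) * x ^ (2 - δ) ≤ 6 * (ν - a + a / 2 * x ^ 2) := by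
  have hρ : 0 ≤ ν ^ 2 - a ^ 2 := by nlinarith
  have hsplit : √(ν ^ 2 - a ^ 2) ^ δ * ν ^ (1 - δ) * x ^ (2 - δ) =
      ((ν ^ 2 - a ^ 2) / ν) ^ (δ / 2) * (ν * x ^ 2) ^ (1 - δ / 2) := by
    have hν' : ν ^ (1 - δ / 2) = ν ^ (1 - δ) * ν ^ (δ / 2) := by
      rw [← Real.rpow_add hν]; ring_nf
    have hx' : (x ^ 2) ^ (1 - δ / 2) = x ^ (2 - δ) := by
      rw [← Real.rpow_natCast, ← Real.rpow_mul hx]; ring_nf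
    have hνδ : ν ^ (δ / 2) ≠ 0 := (Real.rpow_pos_of_pos hν _).ne'
    rw [Real.div_rpow hρ hν.le, Real.mul_rpow hν.le (sq_nonneg x), hν', hx', Real.sqrt_eq_rpow,
      ← Real.rpow_mul hρ]
    field_simp
  have hfirst : (ν ^ 2 - a ^ 2) / ν ≤ 2 * (ν - a) := by
    rw [div_le_iff₀ hν]; nlinarith
  calc √(ν ^ 2 - a ^ 2) ^ δ * ν ^ (1 - δ) * x ^ (2 - δ)
      ≤ (ν ^ 2 - a ^ 2) / ν + ν * x ^ 2 := by
        rw [hsplit]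
        exact rpow_mul_rpow_one_sub_le_add (by positivity) (by positivity) (by linarith)
          (by linarith)
    _ ≤ 6 * (ν - a + a / 2 * x ^ 2) := by
        nlinarith [mul_nonneg (sub_nonneg.2 haν) (by nlinarith : 0 ≤ 4 - x ^ 2),
          mul_nonneg ha (sq_nonneg x)]

theorem rpow_mul_rpow_one_sub_le_of_le {ρ ν δ₁ δ₂ : ℝ} (hρ : 0 < ρ) (hρν : ρ ≤ ν)
    (hδ : δ₁ ≤ δ₂) : ρ ^ δ₂ * ν ^ (1 - δ₂) ≤ ρ ^ δ₁ * ν ^ (1 - δ₁) := by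
  have hν : 0 < ν := hρ.trans_le hρν
  have hratio : ∀ δ : ℝ, ρ ^ δ * ν ^ (1 - δ) = (ρ / ν) ^ δ * ν := fun δ ↦ by
    rw [Real.div_rpow hρ.le hν.le, Real.rpow_sub hν, Real.rpow_one]
    field_simp
  rw [hratio, hratio]
  gcongr ?_ * ν
  exact Real.rpow_le_rpow_of_exponent_ge (by positivity) ((div_le_one hν).2 hρν) hδ

theorem volume_closedBall_inter_cylinder_le {u : ℝ³} (hu : ‖u‖ = 1) {ε : ℝ} (hε : 0 ≤ ε) :
    volume {x : ℝ³ | ‖x‖ ≤ 1 ∧ ‖x - ⟪x, u⟫ • u‖ ≤ ε} ≤ ENNReal.ofReal (8 * ε ^ 2) := by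
  obtain ⟨b, hb⟩ := (show Orthonormal ℝ (({0} : Set (Fin 3)).domRestrict fun _ ↦ u) from
    ⟨fun _ ↦ hu, fun i j hij ↦ absurd (Subsingleton.elim i j) hij⟩)
    |>.exists_orthonormalBasis_extension_of_card_eq (by simp)
  have hb0 : b 0 = u := hb 0 rfl
  let box : Set (Fin 3 → ℝ) := univ.pi fun i ↦ if i = 0 then Icc (-1) 1 else Icc (-ε) ε
  let coord : ℝ³ → Fin 3 → ℝ := fun x ↦ (MeasurableEquiv.toLp 2 (Fin 3 → ℝ)).symm (b.repr x)
  have hcoord : MeasurePreserving coord volume volume :=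
    (EuclideanSpace.volume_preserving_symm_measurableEquiv_toLp (Fin 3)).comp
      b.measurePreserving_repr
  have hsub : {x : ℝ³ | ‖x‖ ≤ 1 ∧ ‖x - ⟪x, u⟫ • u‖ ≤ ε} ⊆ coord ⁻¹' box := by
    rintro x ⟨hx, hxu⟩ i -
    have hcoord_i : coord x i = ⟪b i, x⟫ := b.repr_apply_apply x i
    rcases eq_or_ne i 0 with rfl | hi
    · simp only [if_pos, hcoord_i, hb0]
      exact abs_le.mp ((abs_real_inner_le_norm u x).trans (by rw [hu, one_mul]; exact hx))
    · have hbi : ⟪b i, x⟫ = ⟪b i, x - ⟪x, u⟫ • u⟫ := by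
        rw [inner_sub_right, real_inner_smul_right, ← hb0, b.orthonormal.2 hi]
        ring
      simp only [if_neg hi, hcoord_i, hbi]
      exact abs_le.mp ((abs_real_inner_le_norm _ _).trans
        (by rw [b.orthonormal.1 i, one_mul]; exact hxu))
  have hbox : MeasurableSet box := .univ_pi fun i ↦ by split <;> exact measurableSet_Icc
  calc volume {x : ℝ³ | ‖x‖ ≤ 1 ∧ ‖x - ⟪x, u⟫ • u‖ ≤ ε}
      ≤ volume (coord ⁻¹' box) := measure_mono hsub
    _ = volume box := hcoord.measure_preimage hbox.nullMeasurableSet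
    _ = ENNReal.ofReal (8 * ε ^ 2) := by
      rw [volume_pi_pi, Fin.prod_univ_three, if_pos rfl, if_neg (by decide), if_neg (by decide),
        Real.volume_Icc, Real.volume_Icc, ← ENNReal.ofReal_mul (by norm_num),
        ← ENNReal.ofReal_mul (by linarith)]
      ring_nf

theorem toSphere_cap_le {u : ℝ³} (hu : ‖u‖ = 1) {ε : ℝ} (hε : 0 ≤ ε) :
    σ {ω : S² | ‖(ω : ℝ³) + u‖ ≤ ε} ≤ ENNReal.ofReal (24 * ε ^ 2) := by
  have hcap : MeasurableSet {ω : S² | ‖(ω : ℝ³) + u‖ ≤ ε} :=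
    (isClosed_le (by fun_prop) continuous_const).measurableSet
  have hcone : Ioo (0 : ℝ) 1 • (Subtype.val '' {ω : S² | ‖(ω : ℝ³) + u‖ ≤ ε}) ⊆
      {x : ℝ³ | ‖x‖ ≤ 1 ∧ ‖x - ⟪x, u⟫ • u‖ ≤ ε} := by
    rintro _ ⟨r, ⟨hr0, hr1⟩, _, ⟨ω, hω, rfl⟩, rfl⟩
    have hω1 : ‖(ω : ℝ³)‖ = 1 := norm_eq_of_mem_sphere ω
    have hproj : r • (ω : ℝ³) - ⟪r • (ω : ℝ³), u⟫ • u
        = r • (((ω : ℝ³) + u) - ⟪(ω : ℝ³) + u, u⟫ • u) := by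
      rw [real_inner_smul_left, inner_add_left, real_inner_self_eq_norm_mul_norm, hu]
      module
    refine ⟨by rw [norm_smul, hω1, Real.norm_of_nonneg hr0.le, mul_one]; exact hr1.le, ?_⟩
    rw [hproj, norm_smul, Real.norm_of_nonneg hr0.le]
    have := (norm_sub_inner_smul_le hu ((ω : ℝ³) + u)).trans hω
    nlinarith [norm_nonneg (((ω : ℝ³) + u) - ⟪(ω : ℝ³) + u, u⟫ • u)]
  rw [Measure.toSphere_apply' _ hcap, finrank_euclideanSpace_fin]
  calc ((3 : ℕ) : ℝ≥0∞) *
        volume (Ioo (0 : ℝ) 1 • (Subtype.val '' {ω : S² | ‖(ω : ℝ³) + u‖ ≤ ε}))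
      ≤ ENNReal.ofReal 3 * ENNReal.ofReal (8 * ε ^ 2) := by
        gcongr
        · simp
        · exact (measure_mono hcone).trans (volume_closedBall_inter_cylinder_le hu hε)
    _ = ENNReal.ofReal (24 * ε ^ 2) := by rw [← ENNReal.ofReal_mul (by norm_num)]; ring_nf

theorem lintegral_norm_add_rpow_neg_le {u : ℝ³} (hu : ‖u‖ = 1) {s : ℝ} (hs0 : 0 < s)
    (hs2 : s < 2) :
    ∫⁻ ω : S², ENNReal.ofReal (‖(ω : ℝ³) + u‖ ^ (-s)) ∂σ ≤
      σ univ + ENNReal.ofReal (24 * (s / (2 - s))) := by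
  have hmeas : Measurable fun ω : S² ↦ ‖(ω : ℝ³) + u‖ ^ (-s) := by fun_prop
  rw [lintegral_eq_lintegral_meas_lt _ (.of_forall fun _ ↦ by positivity) hmeas.aemeasurable,
    ← Ioc_union_Ioi_eq_Ioi zero_le_one]
  refine (lintegral_union_le _ _ _).trans (add_le_add ?_ ?_)
  · calc ∫⁻ t in Ioc 0 1, σ {ω | t < ‖(ω : ℝ³) + u‖ ^ (-s)}
        ≤ ∫⁻ _ in Ioc (0 : ℝ) 1, σ univ := lintegral_mono fun _ ↦ measure_mono (subset_univ _)
      _ = σ univ := by simp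
  have hlevel : ∀ t ∈ Ioi (1 : ℝ), σ {ω : S² | t < ‖(ω : ℝ³) + u‖ ^ (-s)} ≤
      ENNReal.ofReal (24 * t ^ (-2 / s)) := by
    intro t ht
    have ht0 : 0 < t := zero_lt_one.trans ht
    have hsub : {ω : S² | t < ‖(ω : ℝ³) + u‖ ^ (-s)} ⊆
        {ω : S² | ‖(ω : ℝ³) + u‖ ≤ t ^ (-1 / s)} := by
      intro ω (hω : t < _)
      rcases (norm_nonneg ((ω : ℝ³) + u)).eq_or_lt with h0 | hpos
      · show ‖(ω : ℝ³) + u‖ ≤ _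
        rw [← h0]
        positivity
      · calc ‖(ω : ℝ³) + u‖ = (‖(ω : ℝ³) + u‖ ^ (-s)) ^ (-1 / s) := by
              rw [← Real.rpow_mul hpos.le, show -s * (-1 / s) = 1 by field_simp, Real.rpow_one]
          _ ≤ t ^ (-1 / s) :=
            Real.rpow_le_rpow_of_nonpos ht0 hω.le
              (div_nonpos_of_nonpos_of_nonneg (by norm_num) hs0.le)
    calc σ {ω : S² | t < ‖(ω : ℝ³) + u‖ ^ (-s)}
        ≤ ENNReal.ofReal (24 * (t ^ (-1 / s)) ^ 2) :=
          (measure_mono hsub).trans (toSphere_cap_le hu (by positivity))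
      _ = ENNReal.ofReal (24 * t ^ (-2 / s)) := by
          rw [← Real.rpow_natCast, ← Real.rpow_mul ht0.le]
          ring_nf
  have hexp : -2 / s < -1 := by rw [div_lt_iff₀ hs0]; linarith
  calc ∫⁻ t in Ioi 1, σ {ω | t < ‖(ω : ℝ³) + u‖ ^ (-s)}
      ≤ ∫⁻ t in Ioi (1 : ℝ), ENNReal.ofReal (24 * t ^ (-2 / s)) :=
        setLIntegral_mono' measurableSet_Ioi hlevel
    _ = ENNReal.ofReal (∫ t in Ioi (1 : ℝ), 24 * t ^ (-2 / s)) := by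
        refine (ofReal_integral_eq_lintegral_ofReal
          ((integrableOn_Ioi_rpow_of_lt hexp one_pos).const_mul 24) ?_).symm
        filter_upwards [self_mem_ae_restrict measurableSet_Ioi] with t (ht : 1 < t)
        have : 0 < t := zero_lt_one.trans ht
        positivity
    _ = ENNReal.ofReal (24 * (s / (2 - s))) := by
        rw [integral_const_mul, integral_Ioi_rpow_of_lt hexp one_pos, Real.one_rpow]
        have hsum : -2 / s + 1 = -((2 - s) / s) := by field_simp; ring
        rw [hsum, neg_div_neg_eq, one_div_div]

theorem integrable_norm_add_rpow_neg {u : ℝ³} (hu : ‖u‖ = 1) {s : ℝ} (hs0 : 0 < s)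
    (hs2 : s < 2) : Integrable (fun ω : S² ↦ ‖(ω : ℝ³) + u‖ ^ (-s)) σ :=
  ⟨(by fun_prop : Measurable _).aestronglyMeasurable,
    (hasFiniteIntegral_iff_ofReal (.of_forall fun _ ↦ by positivity)).2 <|
    (lintegral_norm_add_rpow_neg_le hu hs0 hs2).trans_lt
      (ENNReal.add_lt_top.2 ⟨measure_lt_top _ _, ENNReal.ofReal_lt_top⟩)⟩

theorem integral_norm_add_rpow_neg_le {u : ℝ³} (hu : ‖u‖ = 1) {s : ℝ} (hs0 : 0 < s)
    (hs2 : s < 2) :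
    ∫ ω : S², ‖(ω : ℝ³) + u‖ ^ (-s) ∂σ ≤ (σ).real univ + 24 * (s / (2 - s)) := by
  rw [integral_eq_lintegral_of_nonneg_ae (.of_forall fun _ ↦ by positivity)
    (by fun_prop : Measurable _).aestronglyMeasurable]
  have h := ENNReal.toReal_mono
    (ENNReal.add_ne_top.2 ⟨measure_ne_top _ _, ENNReal.ofReal_ne_top⟩)
    (lintegral_norm_add_rpow_neg_le hu hs0 hs2)
  rwa [ENNReal.toReal_add (measure_ne_top _ _) ENNReal.ofReal_ne_top,
    ENNReal.toReal_ofReal (by have := div_pos hs0 (sub_pos.2 hs2); positivity)] at h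

theorem integral_one_div_add_inner_le {δ : ℝ} (hδ0 : 0 < δ) (hδ2 : δ < 2) {ν : ℝ} (hν : 0 < ν)
    {n : ℝ³} (hn : ‖n‖ < ν) :
    ∫ ω : S², 1 / ((ν + ⟪n, (ω : ℝ³)⟫) / 2) ∂σ ≤
      12 * ((σ).real univ + 24 * ((2 - δ) / δ)) / (√(ν ^ 2 - ‖n‖ ^ 2) ^ δ * ν ^ (1 - δ)) := by
  obtain ⟨u, hu, hnu⟩ := exists_norm_eq_one_smul_eq n
  have hden : ∀ ω : S², ν + ⟪n, (ω : ℝ³)⟫ = ν - ‖n‖ + ‖n‖ / 2 * ‖(ω : ℝ³) + u‖ ^ 2 := by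
    intro ω
    nth_rewrite 1 [hnu]
    rw [real_inner_smul_left, norm_add_sq_real, norm_eq_of_mem_sphere ω, hu, real_inner_comm]
    ring
  have hden_pos : ∀ ω : S², 0 < ν + ⟪n, (ω : ℝ³)⟫ := fun ω ↦ by
    rw [hden]; nlinarith [norm_nonneg n]
  set D := √(ν ^ 2 - ‖n‖ ^ 2) ^ δ * ν ^ (1 - δ)
  have hD : 0 < D := by
    have : 0 < √(ν ^ 2 - ‖n‖ ^ 2) := Real.sqrt_pos.2 (by nlinarith [norm_nonneg n])
    positivity
  have hnull : σ {ω : S² | ‖(ω : ℝ³) + u‖ ≤ 0} = 0 :=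
    nonpos_iff_eq_zero.1 ((toSphere_cap_le hu le_rfl).trans (by simp))
  have hbound : ∀ᵐ ω : S² ∂σ, 1 / ((ν + ⟪n, (ω : ℝ³)⟫) / 2) ≤
      12 / D * ‖(ω : ℝ³) + u‖ ^ (-(2 - δ)) := by
    filter_upwards [measure_eq_zero_iff_ae_notMem.1 hnull] with ω (hω : ¬ _ ≤ _)
    have hx : 0 < ‖(ω : ℝ³) + u‖ := not_le.1 hω
    have hx2 : ‖(ω : ℝ³) + u‖ ≤ 2 := by
      simpa [norm_eq_of_mem_sphere ω, hu, one_add_one_eq_two] using norm_add_le (ω : ℝ³) u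
    have hkey := sqrt_sq_sub_sq_rpow_mul_le hν (norm_nonneg n) hn.le hx.le hx2 hδ0.le hδ2.le
    rw [← hden] at hkey
    rw [Real.rpow_neg hx.le, one_div_div, ← div_eq_mul_inv, div_div,
      div_le_div_iff₀ (hden_pos ω) (by positivity)]
    linarith
  calc ∫ ω : S², 1 / ((ν + ⟪n, (ω : ℝ³)⟫) / 2) ∂σ
      ≤ ∫ ω : S², 12 / D * ‖(ω : ℝ³) + u‖ ^ (-(2 - δ)) ∂σ :=
        integral_mono_of_nonneg (.of_forall fun ω ↦ by have := hden_pos ω; positivity)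
          ((integrable_norm_add_rpow_neg hu (by linarith) (by linarith)).const_mul _) hbound
    _ = 12 / D * ∫ ω : S², ‖(ω : ℝ³) + u‖ ^ (-(2 - δ)) ∂σ := integral_const_mul _ _
    _ ≤ 12 / D * ((σ).real univ + 24 * ((2 - δ) / δ)) := by
        gcongr
        simpa using integral_norm_add_rpow_neg_le hu (by linarith) (by linarith : 2 - δ < 2)
    _ = 12 * ((σ).real univ + 24 * ((2 - δ) / δ)) / D := div_mul_eq_mul_div _ _ _

/-- For every `δ > 0` there exists `C > 0` depending only on `δ` such that for all
`ν > 0` and `n ∈ ℝ³` with `|n| < ν`, setting `ρ = √(ν² - |n|²)`, the surface integral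
over `S²` of `1/((ν + n·ω)/2)` is at most `C/(ρ^δ ν^(1-δ))`. -/
theorem stmt6 (δ : ℝ) (hδ : 0 < δ) :
    ∃ C > 0, ∀ (ν : ℝ), 0 < ν → ∀ n : EuclideanSpace ℝ (Fin 3), ‖n‖ < ν →
      (∫ ω : Metric.sphere (0 : EuclideanSpace ℝ (Fin 3)) 1,
          1 / ((ν + (inner ℝ n (ω : EuclideanSpace ℝ (Fin 3)) : ℝ)) / 2)
          ∂((volume : Measure (EuclideanSpace ℝ (Fin 3))).toSphere))
        ≤ C / (Real.sqrt (ν ^ 2 - ‖n‖ ^ 2) ^ δ * ν ^ (1 - δ)) := by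
  set δ' := min δ 1
  have hδ' : 0 < δ' := lt_min hδ one_pos
  have hδ'2 : δ' < 2 := (min_le_right δ 1).trans_lt one_lt_two
  have hC : 0 < 12 * ((σ).real univ + 24 * ((2 - δ') / δ')) := by
    have := div_pos (sub_pos.2 hδ'2) hδ'
    positivity
  refine ⟨_, hC, fun ν hν n hn ↦ ?_⟩
  have hρ : 0 < √(ν ^ 2 - ‖n‖ ^ 2) := Real.sqrt_pos.2 (by nlinarith [norm_nonneg n])
  have hρν : √(ν ^ 2 - ‖n‖ ^ 2) ≤ ν :=
    Real.sqrt_le_iff.2 ⟨hν.le, by nlinarith [norm_nonneg n]⟩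
  refine (integral_one_div_add_inner_le hδ' hδ'2 hν hn).trans
    (div_le_div_of_nonneg_left hC.le ?_ ?_)
  · positivity
  · exact rpow_mul_rpow_one_sub_le_of_le hρ hρν (min_le_left δ 1)
end

section
/- Let ν > 0 and n ∈ R^3 with |n| < ν, and set ρ := sqrt(ν² - |n|²). For every δ > 0 there exists a constant C > 0 depending only on δ such that the surface integral over S² of 4/(ν² − (n·ω)²) dω is at most C/(ρ^δ ν^{2−δ}). -/
/-!
Multiplying the sphere integral by `∫₀^∞ r² e^{-r²} dr` turns it, in polar coordinates, into the
Gaussian-weighted integral of `4 / (ν² - ⟪n, x / |x|⟫²)` over `ℝ³`. After a rotation taking `n` to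
`|n| e₀` the integrand is `4 |x|² e^{-|x|²} / (ρ² x₀² + ν² x₁² + ν² x₂²)`, and the weighted AM-GM
inequality bounds the denominator below by `ρ^δ ν^(2-δ) |x₀|^δ |x₁|^(1-δ/2) |x₂|^(1-δ/2)`. For
`δ < 1` the resulting majorant is a product of integrable functions `|t|^s e^{-t²/2}` with `s > -1`;
larger `δ` reduce to this case because `ρ ≤ ν`.
-/

open MeasureTheory Real Set Metric

local notation "ℝ³" => EuclideanSpace ℝ (Fin 3)

theorem integral_comp_normalize_mul_fun_norm_addHaar {E : Type*} [NormedAddCommGroup E]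
    [NormedSpace ℝ E] [Nontrivial E] [FiniteDimensional ℝ E] [MeasurableSpace E] [BorelSpace E]
    (μ : Measure E) [μ.IsAddHaarMeasure] (F : E → ℝ) (g : ℝ → ℝ) :
    ∫ x, F (‖x‖⁻¹ • x) * g ‖x‖ ∂μ =
      (∫ ω : sphere (0 : E) 1, F ω ∂μ.toSphere) *
        ∫ r in Ioi (0 : ℝ), r ^ (Module.finrank ℝ E - 1) * g r :=
  calc ∫ x, F (‖x‖⁻¹ • x) * g ‖x‖ ∂μ
      = ∫ x : ({0}ᶜ : Set E), F (‖x.1‖⁻¹ • x.1) * g ‖x.1‖ ∂(μ.comap (↑)) := by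
        rw [integral_subtype_comap (measurableSet_singleton _).compl
          fun x => F (‖x‖⁻¹ • x) * g ‖x‖, restrict_compl_singleton]
    _ = ∫ p, F p.1 * g p.2 ∂μ.toSphere.prod (.volumeIoiPow (Module.finrank ℝ E - 1)) := by
        rw [← μ.measurePreserving_homeomorphUnitSphereProd.integral_comp
          (Homeomorph.measurableEmbedding _) (fun p => F p.1 * g p.2)]
        simp
    _ = _ := by
        rw [integral_prod_mul (fun ω : sphere (0 : E) 1 => F ω) fun r : Ioi (0 : ℝ) => g r]
        congr 1
        simp only [Measure.volumeIoiPow, ENNReal.ofReal]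
        rw [integral_withDensity_eq_integral_smul
            (measurable_subtype_coe.pow_const _).real_toNNReal,
          integral_subtype_comap measurableSet_Ioi
            fun a => Real.toNNReal (a ^ (Module.finrank ℝ E - 1)) • g a]
        refine setIntegral_congr_fun measurableSet_Ioi fun r hr => ?_
        rw [NNReal.smul_def, Real.coe_toNNReal _ (pow_nonneg hr.out.le _), smul_eq_mul]

theorem integral_sq_mul_exp_neg_sq_pos : 0 < ∫ r in Ioi (0 : ℝ), r ^ 2 * exp (-r ^ 2) := by
  have h := integral_rpow_mul_exp_neg_rpow (p := 2) (q := 2) two_pos (by norm_num)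
  norm_cast at h
  rw [h]
  have := Gamma_pos_of_pos (s := ((2 + 1 : ℕ) : ℝ) / 2) (by norm_num)
  positivity

theorem integrable_abs_rpow_mul_exp_neg_mul_sq {b : ℝ} (hb : 0 < b) {s : ℝ} (hs : -1 < s) :
    Integrable fun x : ℝ => |x| ^ s * exp (-b * x ^ 2) := by
  have hpos : IntegrableOn (fun x : ℝ => |x| ^ s * exp (-b * x ^ 2)) (Ioi 0) :=
    (integrableOn_rpow_mul_exp_neg_mul_sq hb hs).congr_fun
      (fun x hx => by rw [abs_of_pos hx]) measurableSet_Ioi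
  rw [← integrableOn_univ, ← Iio_union_Ici (a := (0 : ℝ)), integrableOn_union,
    integrableOn_Ici_iff_integrableOn_Ioi]
  refine ⟨?_, hpos⟩
  rw [← (Measure.measurePreserving_neg (volume : Measure ℝ)).integrableOn_comp_preimage
      (Homeomorph.neg ℝ).measurableEmbedding]
  simpa [Function.comp_def] using hpos

theorem exists_linearIsometryEquiv_inner_apply_eq {ι : Type*} [Fintype ι] [DecidableEq ι]
    (n : EuclideanSpace ℝ ι) (i : ι) :
    ∃ T : EuclideanSpace ℝ ι ≃ₗᵢ[ℝ] EuclideanSpace ℝ ι, ∀ y, inner ℝ n (T y) = ‖n‖ * y i := by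
  set v : EuclideanSpace ℝ ι := ‖n‖ • EuclideanSpace.single i 1
  have hv : ‖v‖ = ‖n‖ := by simp [v, norm_smul]
  set T := Submodule.reflection (ℝ ∙ (v - n))ᗮ
  have hTn : T n = v := by
    rw [← Submodule.reflection_sub hv, Submodule.reflection_reflection]
  refine ⟨T, fun y => ?_⟩
  rw [← T.inner_map_map, Submodule.reflection_reflection, hTn, real_inner_smul_left,
    EuclideanSpace.inner_single_left]
  simp

theorem rpow_mul_rpow_mul_rpow_le_add_add {a b c p q r : ℝ} (ha : 0 ≤ a) (hb : 0 ≤ b)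
    (hc : 0 ≤ c) (hp : 0 ≤ p) (hq : 0 ≤ q) (hr : 0 ≤ r) (hpqr : p + q + r = 1) :
    a ^ p * b ^ q * c ^ r ≤ a + b + c := by
  have := geom_mean_le_arith_mean3_weighted hp hq hr ha hb hc hpqr
  nlinarith [mul_nonneg hq ha, mul_nonneg hr ha, mul_nonneg hp hb, mul_nonneg hr hb,
    mul_nonneg hp hc, mul_nonneg hq hc]

theorem rpow_mul_rpow_mul_abs_rpow_le_sum_sq {ρ ν δ : ℝ} (hρ : 0 ≤ ρ) (hν : 0 ≤ ν)
    (hδ0 : 0 ≤ δ) (hδ2 : δ < 2) (x y w : ℝ) :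
    ρ ^ δ * ν ^ (2 - δ) * (|x| ^ δ * |y| ^ (1 - δ / 2) * |w| ^ (1 - δ / 2)) ≤
      ρ ^ 2 * x ^ 2 + ν ^ 2 * y ^ 2 + ν ^ 2 * w ^ 2 := by
  have hsq : ∀ {t : ℝ} (s : ℝ), 0 ≤ t → (t ^ 2) ^ (s / 2) = t ^ s := fun s ht => by
    rw [← rpow_natCast_mul ht]; push_cast; ring_nf
  have key := rpow_mul_rpow_mul_rpow_le_add_add (sq_nonneg (ρ * |x|)) (sq_nonneg (ν * |y|))
    (sq_nonneg (ν * |w|)) (p := δ / 2) (q := (1 - δ / 2) / 2) (r := (1 - δ / 2) / 2)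
    (by linarith) (by linarith) (by linarith) (by ring)
  rw [hsq _ (by positivity), hsq _ (by positivity), hsq _ (by positivity),
    mul_rpow hρ (abs_nonneg x), mul_rpow hν (abs_nonneg y), mul_rpow hν (abs_nonneg w)] at key
  have hν2 : ν ^ (2 - δ) = ν ^ (1 - δ / 2) * ν ^ (1 - δ / 2) := by
    rw [← rpow_add' hν (by linarith)]; ring_nf
  simp only [mul_pow, sq_abs] at key
  rw [hν2]
  linarith

theorem mul_exp_neg_le (x : ℝ) : x * exp (-x) ≤ 2 * exp (-(x / 2)) := by
  have h : x ≤ 2 * exp (x / 2) := by linarith [add_one_le_exp (x / 2), exp_pos (x / 2)]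
  calc x * exp (-x) ≤ 2 * exp (x / 2) * exp (-x) := by gcongr
    _ = 2 * exp (-(x / 2)) := by rw [mul_assoc, ← exp_add]; ring_nf

theorem rpow_mul_rpow_sub_le_of_le {ρ ν δ δ' c : ℝ} (hρ : 0 < ρ) (hρν : ρ ≤ ν) (hδ : δ' ≤ δ) :
    ρ ^ δ * ν ^ (c - δ) ≤ ρ ^ δ' * ν ^ (c - δ') := by
  have hν : 0 < ν := hρ.trans_le hρν
  calc ρ ^ δ * ν ^ (c - δ) = ρ ^ δ' * ρ ^ (δ - δ') * ν ^ (c - δ) := by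
        rw [← rpow_add hρ]; ring_nf
    _ ≤ ρ ^ δ' * ν ^ (δ - δ') * ν ^ (c - δ) := by gcongr
    _ = ρ ^ δ' * ν ^ (c - δ') := by rw [mul_assoc, ← rpow_add hν]; ring_nf

theorem sq_sub_sq_mul_div_sum_sq_eq {ν ρ a x y w : ℝ} (hρa : ρ ^ 2 = ν ^ 2 - a ^ 2)
    (hS : x ^ 2 + y ^ 2 + w ^ 2 ≠ 0) :
    ν ^ 2 - (a * x) ^ 2 / (x ^ 2 + y ^ 2 + w ^ 2) =
      (ρ ^ 2 * x ^ 2 + ν ^ 2 * y ^ 2 + ν ^ 2 * w ^ 2) / (x ^ 2 + y ^ 2 + w ^ 2) := by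
  rw [eq_div_iff hS, sub_mul, div_mul_cancel₀ _ hS]
  linear_combination (-x ^ 2) * hρa

theorem four_div_sub_mul_exp_le {ν ρ a δ x y w : ℝ} (hν : 0 < ν) (hρ : 0 < ρ)
    (hρa : ρ ^ 2 = ν ^ 2 - a ^ 2) (hδ0 : 0 < δ) (hδ2 : δ < 2) (hx : x ≠ 0) (hy : y ≠ 0)
    (hw : w ≠ 0) :
    4 / (ν ^ 2 - (a * x) ^ 2 / (x ^ 2 + y ^ 2 + w ^ 2)) * exp (-(x ^ 2 + y ^ 2 + w ^ 2)) ≤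
      8 / (ρ ^ δ * ν ^ (2 - δ)) * (|x| ^ (-δ) * exp (-(1 / 2) * x ^ 2) *
        (|y| ^ (δ / 2 - 1) * exp (-(1 / 2) * y ^ 2)) *
        (|w| ^ (δ / 2 - 1) * exp (-(1 / 2) * w ^ 2))) := by
  set S := x ^ 2 + y ^ 2 + w ^ 2
  set A := ρ ^ 2 * x ^ 2 + ν ^ 2 * y ^ 2 + ν ^ 2 * w ^ 2
  set W := |x| ^ δ * |y| ^ (1 - δ / 2) * |w| ^ (1 - δ / 2)
  have hS : 0 < S := by positivity
  have hW : 0 < W := by positivity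
  have hA : 0 < A := by positivity
  have hAW : ρ ^ δ * ν ^ (2 - δ) * W ≤ A :=
    rpow_mul_rpow_mul_abs_rpow_le_sum_sq hρ.le hν.le hδ0.le hδ2 x y w
  calc 4 / (ν ^ 2 - (a * x) ^ 2 / S) * exp (-S) = 4 * (S * exp (-S)) / A := by
        rw [sq_sub_sq_mul_div_sum_sq_eq hρa hS.ne']
        field_simp
        exact mul_comm _ _
    _ ≤ 4 * (2 * exp (-(S / 2))) / (ρ ^ δ * ν ^ (2 - δ) * W) := by
        gcongr 4 * ?_ / ?_
        exact mul_exp_neg_le S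
    _ = _ := by
        have hexp : exp (-(S / 2)) = exp (-(1 / 2) * x ^ 2) * exp (-(1 / 2) * y ^ 2) *
            exp (-(1 / 2) * w ^ 2) := by
          simp only [S]
          rw [← exp_add, ← exp_add]
          ring_nf
        rw [hexp, rpow_neg (abs_nonneg x), show δ / 2 - 1 = -(1 - δ / 2) by ring,
          rpow_neg (abs_nonneg y), rpow_neg (abs_nonneg w)]
        simp only [W]
        field_simp
        norm_num

noncomputable def sphereMajorant (δ : ℝ) (z : Fin 3 → ℝ) : ℝ :=
  ∏ i, |z i| ^ (![-δ, δ / 2 - 1, δ / 2 - 1] i) * exp (-(1 / 2) * z i ^ 2)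

theorem integrable_sphereMajorant {δ : ℝ} (hδ0 : 0 < δ) (hδ1 : δ < 1) :
    Integrable (sphereMajorant δ) :=
  Integrable.fin_nat_prod fun i => integrable_abs_rpow_mul_exp_neg_mul_sq (by norm_num)
    (by fin_cases i <;> simp <;> linarith)

theorem integral_sphere_four_div_le {δ ν : ℝ} (hδ0 : 0 < δ) (hδ1 : δ < 1) (hν : 0 < ν)
    {n : ℝ³} (hn : ‖n‖ < ν) :
    ∫ ω : sphere (0 : ℝ³) 1, 4 / (ν ^ 2 - inner ℝ n (ω : ℝ³) ^ 2) ∂(volume : Measure ℝ³).toSphere ≤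
      8 * (∫ z, sphereMajorant δ z) / (∫ r in Ioi (0 : ℝ), r ^ 2 * exp (-r ^ 2)) /
        (√(ν ^ 2 - ‖n‖ ^ 2) ^ δ * ν ^ (2 - δ)) := by
  have hρ2 : 0 < ν ^ 2 - ‖n‖ ^ 2 := by nlinarith [norm_nonneg n]
  set ρ := √(ν ^ 2 - ‖n‖ ^ 2)
  have hρ : 0 < ρ := sqrt_pos.2 hρ2
  have hρsq : ρ ^ 2 = ν ^ 2 - ‖n‖ ^ 2 := sq_sqrt hρ2.le
  obtain ⟨T, hT⟩ := exists_linearIsometryEquiv_inner_apply_eq n 0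
  set f : (Fin 3 → ℝ) → ℝ := fun z =>
    4 / (ν ^ 2 - (‖n‖ * z 0) ^ 2 / (z 0 ^ 2 + z 1 ^ 2 + z 2 ^ 2)) *
      exp (-(z 0 ^ 2 + z 1 ^ 2 + z 2 ^ 2))
  have hpolar : (∫ ω : sphere (0 : ℝ³) 1, 4 / (ν ^ 2 - inner ℝ n (ω : ℝ³) ^ 2)
        ∂(volume : Measure ℝ³).toSphere) *
      (∫ r in Ioi (0 : ℝ), r ^ 2 * exp (-r ^ 2)) = ∫ z, f z := by
    have h := integral_comp_normalize_mul_fun_norm_addHaar volume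
      (fun x : ℝ³ => 4 / (ν ^ 2 - inner ℝ n x ^ 2)) (fun r => exp (-r ^ 2))
    rw [finrank_euclideanSpace_fin] at h
    rw [← h, ← T.measurePreserving.integral_comp T.toHomeomorph.measurableEmbedding,
      ← (PiLp.volume_preserving_toLp (Fin 3)).integral_comp
        (MeasurableEquiv.toLp 2 (Fin 3 → ℝ)).measurableEmbedding]
    congr 1
    ext z
    have hnorm : ‖WithLp.toLp 2 z‖ ^ 2 = z 0 ^ 2 + z 1 ^ 2 + z 2 ^ 2 := by
      simp [EuclideanSpace.real_norm_sq_eq, Fin.sum_univ_three]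
    simp only [f, T.norm_map, real_inner_smul_right, hT]
    rw [mul_pow, inv_pow, hnorm]
    ring_nf
  have hcoord : ∀ᵐ z : Fin 3 → ℝ, z 0 ≠ 0 ∧ z 1 ≠ 0 ∧ z 2 ≠ 0 := by
    simp only [volume_pi, Filter.eventually_and]
    exact ⟨Measure.ae_eval_ne _ 0 0, Measure.ae_eval_ne _ 1 0, Measure.ae_eval_ne _ 2 0⟩
  have hbound : ∫ z, f z ≤ ∫ z, 8 / (ρ ^ δ * ν ^ (2 - δ)) * sphereMajorant δ z := by
    refine integral_mono_of_nonneg ?_ ((integrable_sphereMajorant hδ0 hδ1).const_mul _) ?_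
    · filter_upwards [hcoord] with z ⟨h0, _⟩
      simp only [f]
      rw [sq_sub_sq_mul_div_sum_sq_eq hρsq (by positivity)]
      positivity
    · filter_upwards [hcoord] with z ⟨h0, h1, h2⟩
      refine (four_div_sub_mul_exp_le hν hρ hρsq hδ0 (by linarith) h0 h1 h2).trans_eq ?_
      simp [sphereMajorant, Fin.prod_univ_three]
  rw [integral_const_mul] at hbound
  calc _ = (∫ z, f z) / ∫ r in Ioi (0 : ℝ), r ^ 2 * exp (-r ^ 2) :=
        eq_div_of_mul_eq integral_sq_mul_exp_neg_sq_pos.ne' hpolar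
    _ ≤ 8 / (ρ ^ δ * ν ^ (2 - δ)) * (∫ z, sphereMajorant δ z) /
          ∫ r in Ioi (0 : ℝ), r ^ 2 * exp (-r ^ 2) := by gcongr
    _ = _ := by ring

/-- For every `δ > 0` there exists `C > 0` depending only on `δ` such that for all
`ν > 0` and `n ∈ ℝ³` with `|n| < ν`, setting `ρ = √(ν² - |n|²)`, the surface integral
over `S²` of `4/(ν² - (n·ω)²)` is at most `C/(ρ^δ ν^(2-δ))`. -/
theorem stmt9 (δ : ℝ) (hδ : 0 < δ) :
    ∃ C > 0, ∀ (ν : ℝ), 0 < ν → ∀ n : EuclideanSpace ℝ (Fin 3), ‖n‖ < ν →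
      (∫ ω : Metric.sphere (0 : EuclideanSpace ℝ (Fin 3)) 1,
          4 / (ν ^ 2 - (inner ℝ n (ω : EuclideanSpace ℝ (Fin 3)) : ℝ) ^ 2)
          ∂((volume : Measure (EuclideanSpace ℝ (Fin 3))).toSphere))
        ≤ C / (Real.sqrt (ν ^ 2 - ‖n‖ ^ 2) ^ δ * ν ^ (2 - δ)) := by
  set δ' := min δ (1 / 2)
  have hδ'0 : 0 < δ' := lt_min hδ (by norm_num)
  have hδ'1 : δ' < 1 := (min_le_right _ _).trans_lt (by norm_num)
  set C := 8 * (∫ z, sphereMajorant δ' z) / ∫ r in Ioi (0 : ℝ), r ^ 2 * exp (-r ^ 2)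
  refine ⟨max C 1, lt_max_of_lt_right one_pos, fun ν hν n hn => ?_⟩
  have hρ : 0 < √(ν ^ 2 - ‖n‖ ^ 2) := sqrt_pos.2 (by nlinarith [norm_nonneg n])
  have hρν : √(ν ^ 2 - ‖n‖ ^ 2) ≤ ν :=
    (sqrt_le_sqrt (by nlinarith [norm_nonneg n])).trans_eq (sqrt_sq hν.le)
  calc _ ≤ C / (√(ν ^ 2 - ‖n‖ ^ 2) ^ δ' * ν ^ (2 - δ')) :=
        integral_sphere_four_div_le hδ'0 hδ'1 hν hn
    _ ≤ max C 1 / (√(ν ^ 2 - ‖n‖ ^ 2) ^ δ * ν ^ (2 - δ)) :=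
        div_le_div₀ (by positivity) (le_max_left _ _) (by positivity)
          (rpow_mul_rpow_sub_le_of_le hρ hρν (min_le_left _ _))
end

section
/- For 0 < b < 1 and any fixed unit vector u ∈ R^3, the integral over R^3 of e^{-|q|} / (|q|^{2 + b/2} · sin^b(φ(q)/2)) dq is finite, where φ(q) ∈ [0, π] is the angle between u and q. -/
/-!
Reflect `u` to the third basis vector and write `q = (x, y, z)`, `r = ‖q‖`, `φ` for the angle.
Since `2 r sin (φ / 2) ≥ r sin φ = √(x² + y²) ≥ max |x| |y|` and `|x|, |y|, |z| ≤ r`, the integrand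
is dominated by `2 ^ b ∏ |t| ^ (-s) e ^ (-|t| / 3)` over the coordinates `t`, with
`s = 2 / 3 + b / 6 < 1`; this product of one-variable functions is integrable.
-/

open MeasureTheory InnerProductGeometry Set Real

theorem integrable_abs_rpow_mul_exp_neg_mul_abs {p c : ℝ} (hp : -1 < p) (hc : 0 < c) :
    Integrable fun x : ℝ => |x| ^ p * exp (-c * |x|) := by
  have hIoi : IntegrableOn (fun x : ℝ => |x| ^ p * exp (-c * |x|)) (Ioi 0) := by
    refine (integrableOn_rpow_mul_exp_neg_mul_rpow hp one_pos hc).congr_fun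
      (fun x hx => ?_) measurableSet_Ioi
    simp only [rpow_one, abs_of_pos (mem_Ioi.mp hx)]
  have hIic : IntegrableOn (fun x : ℝ => |x| ^ p * exp (-c * |x|)) (Iic 0) := by
    rw [← (Measure.measurePreserving_neg (volume : Measure ℝ)).integrableOn_comp_preimage
      (Homeomorph.neg ℝ).measurableEmbedding]
    simp only [Function.comp_def, abs_neg, neg_preimage, neg_Iic, neg_zero]
    rwa [integrableOn_Ici_iff_integrableOn_Ioi]
  rw [← integrableOn_univ, ← Iic_union_Ioi (a := (0 : ℝ))]
  exact hIic.union hIoi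

theorem integrable_comp_norm_angle_iff {E : Type*} [NormedAddCommGroup E] [InnerProductSpace ℝ E]
    [FiniteDimensional ℝ E] [MeasurableSpace E] [BorelSpace E] {u v : E} (h : ‖u‖ = ‖v‖)
    (g : ℝ → ℝ → ℝ) :
    Integrable (fun q => g ‖q‖ (angle u q)) ↔ Integrable (fun q => g ‖q‖ (angle v q)) := by
  set R := Submodule.reflection (ℝ ∙ (u - v))ᗮ
  have hR : (fun q => g ‖q‖ (angle v q)) ∘ R = fun q => g ‖q‖ (angle u q) := by
    ext q
    rw [Function.comp_apply, ← Submodule.reflection_sub h, R.norm_map]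
    exact congrArg _ (R.toLinearIsometry.angle_map u q)
  rw [← hR, R.measurePreserving.integrable_comp_emb R.toHomeomorph.measurableEmbedding]

namespace EuclideanSpace

variable {ι : Type*} [Fintype ι]

theorem integrable_prod_apply {f : ι → ℝ → ℝ} (hf : ∀ i, Integrable (f i)) :
    Integrable fun q : EuclideanSpace ℝ ι => ∏ i, f i (q i) :=
  ((PiLp.volume_preserving_ofLp ι).integrable_comp_emb
    (MeasurableEquiv.toLp 2 (ι → ℝ)).symm.measurableEmbedding
    (g := fun x => ∏ i, f i (x i))).mpr (Integrable.fintype_prod hf)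

theorem ae_apply_ne (i : ι) (a : ℝ) : ∀ᵐ q : EuclideanSpace ℝ ι, q i ≠ a :=
  (PiLp.volume_preserving_ofLp ι).quasiMeasurePreserving.ae (Measure.ae_eval_ne _ i a)

theorem exp_neg_norm_le_prod (q : EuclideanSpace ℝ ι) :
    exp (-‖q‖) ≤ ∏ i, exp (-(Fintype.card ι : ℝ)⁻¹ * |q i|) := by
  rw [← exp_sum, exp_le_exp, ← Finset.mul_sum, neg_mul, neg_le_neg_iff]
  calc (Fintype.card ι : ℝ)⁻¹ * ∑ i, |q i| ≤ (Fintype.card ι : ℝ)⁻¹ * ∑ _i : ι, ‖q‖ := by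
        gcongr with i
        exact PiLp.norm_apply_le q i
    _ ≤ ‖q‖ := by
        rw [Finset.sum_const, Finset.card_univ, nsmul_eq_mul, ← mul_assoc]
        exact mul_le_of_le_one_left (norm_nonneg q) inv_mul_le_one

theorem abs_apply_le_sin_angle_mul_norm [DecidableEq ι] {i j : ι} (hij : i ≠ j)
    (q : EuclideanSpace ℝ ι) :
    |q i| ≤ sin (angle (EuclideanSpace.single j 1) q) * ‖q‖ := by
  have h := sin_angle_mul_norm_mul_norm (EuclideanSpace.single j (1 : ℝ)) q
  have he : ‖EuclideanSpace.single j (1 : ℝ)‖ = 1 := by simp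
  rw [he, one_mul] at h
  rw [h]
  apply abs_le_sqrt
  simp only [inner_self_eq_norm_sq_to_K, he, ringHom_apply, one_pow, norm_sq_eq, norm_eq_abs, sq_abs,
    one_mul, inner_single_left]
  have := Finset.sum_le_univ_sum_of_nonneg (s := {i, j}) (fun k => sq_nonneg (q k))
  rw [Finset.sum_pair hij] at this
  linarith

end EuclideanSpace

theorem InnerProductGeometry.sin_half_angle_nonneg {V : Type*} [NormedAddCommGroup V]
    [InnerProductSpace ℝ V] (x y : V) : 0 ≤ sin (angle x y / 2) :=
  sin_nonneg_of_nonneg_of_le_pi (by linarith [angle_nonneg x y])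
    (by linarith [angle_le_pi x y, pi_pos])

theorem sin_le_two_mul_sin_half {θ : ℝ} (h0 : 0 ≤ θ) (h2π : θ ≤ 2 * π) :
    sin θ ≤ 2 * sin (θ / 2) := by
  have hhalf : 0 ≤ sin (θ / 2) := sin_nonneg_of_nonneg_of_le_pi (by linarith) (by linarith)
  calc sin θ = 2 * sin (θ / 2) * cos (θ / 2) := by rw [← sin_two_mul]; ring_nf
    _ ≤ 2 * sin (θ / 2) * 1 := by gcongr; exact cos_le_one _
    _ = 2 * sin (θ / 2) := mul_one _

theorem rpow_mul_rpow_mul_rpow_le {x y z r σ b : ℝ} (hx : 0 ≤ x) (hy : 0 ≤ y) (hz : 0 ≤ z)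
    (hxr : x ≤ r) (hyr : y ≤ r) (hzr : z ≤ r) (hσ : 0 ≤ σ) (hxσ : x ≤ 2 * r * σ)
    (hyσ : y ≤ 2 * r * σ) (hb0 : 0 < b) (hb2 : b < 2) :
    x ^ (2 / 3 + b / 6) * y ^ (2 / 3 + b / 6) * z ^ (2 / 3 + b / 6) ≤
      2 ^ b * (r ^ (2 + b / 2) * σ ^ b) := by
  set s := 2 / 3 + b / 6 with hs
  set α := 2 / 3 - b / 3 with hα
  have hr : 0 ≤ r := hx.trans hxr
  -- `x ^ (b / 2) * y ^ (b / 2)` is paid for by `σ ^ b`, the rest by `r ^ (α + α + s) = r ^ (2 - b / 2)`.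
  have hsα : s = b / 2 + α := by ring
  calc x ^ s * y ^ s * z ^ s = (x ^ (b / 2) * y ^ (b / 2)) * (x ^ α * y ^ α * z ^ s) := by
        rw [hsα, rpow_add' hx (by linarith), rpow_add' hy (by linarith)]; ring
    _ ≤ ((2 * r * σ) ^ (b / 2) * (2 * r * σ) ^ (b / 2)) * (r ^ α * r ^ α * r ^ s) := by
        have : 0 ≤ α := by linarith
        gcongr
    _ = 2 ^ b * (r ^ b * r ^ (α + α + s) * σ ^ b) := by
        rw [← rpow_add' (by positivity) (by linarith), ← rpow_add' hr (by linarith),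
          ← rpow_add' hr (by linarith), mul_rpow (by positivity) hσ, mul_rpow zero_le_two hr,
          add_halves]
        ring
    _ = 2 ^ b * (r ^ (2 + b / 2) * σ ^ b) := by
        rw [← rpow_add' hr (by linarith), show b + (α + α + s) = 2 + b / 2 by linarith]

theorem exp_neg_norm_div_le_prod {b : ℝ} (hb0 : 0 < b) (hb2 : b < 2)
    {q : EuclideanSpace ℝ (Fin 3)} (hq : ∀ i, q i ≠ 0) :
    exp (-‖q‖) / (‖q‖ ^ (2 + b / 2) * sin (angle (EuclideanSpace.single 2 1) q / 2) ^ b) ≤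
      2 ^ b * ∏ i, (|q i| ^ (-(2 / 3 + b / 6)) * exp (-3⁻¹ * |q i|)) := by
  set θ := angle (EuclideanSpace.single 2 (1 : ℝ)) q
  have hσ : 0 ≤ sin (θ / 2) := sin_half_angle_nonneg _ _
  have hsin : sin θ ≤ 2 * sin (θ / 2) := sin_le_two_mul_sin_half (angle_nonneg _ _)
    (by linarith [angle_le_pi (EuclideanSpace.single 2 (1 : ℝ)) q, pi_pos])
  have hσq : ∀ i ≠ 2, |q i| ≤ 2 * ‖q‖ * sin (θ / 2) := fun i hi =>
    (EuclideanSpace.abs_apply_le_sin_angle_mul_norm hi q).trans (by nlinarith [norm_nonneg q])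
  have hnorm : ∀ i, |q i| ≤ ‖q‖ := fun i => PiLp.norm_apply_le q i
  have hlower : ∏ i, |q i| ^ (2 / 3 + b / 6) ≤
      2 ^ b * (‖q‖ ^ (2 + b / 2) * sin (θ / 2) ^ b) := by
    rw [Fin.prod_univ_three]
    exact rpow_mul_rpow_mul_rpow_le (abs_nonneg _) (abs_nonneg _) (abs_nonneg _) (hnorm 0)
      (hnorm 1) (hnorm 2) hσ (hσq 0 (by decide)) (hσq 1 (by decide)) hb0 hb2
  have hpos : 0 < ∏ i, |q i| ^ (2 / 3 + b / 6) :=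
    Finset.prod_pos fun i _ => rpow_pos_of_pos (abs_pos.2 (hq i)) _
  calc exp (-‖q‖) / (‖q‖ ^ (2 + b / 2) * sin (θ / 2) ^ b)
      ≤ (∏ i, exp (-3⁻¹ * |q i|)) / ((∏ i, |q i| ^ (2 / 3 + b / 6)) / 2 ^ b) := by
        refine div_le_div₀ (by positivity) ?_ (by positivity) ?_
        · simpa using EuclideanSpace.exp_neg_norm_le_prod q
        · rwa [div_le_iff₀' (by positivity)]
    _ = 2 ^ b * ∏ i, (|q i| ^ (-(2 / 3 + b / 6)) * exp (-3⁻¹ * |q i|)) := by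
        simp only [rpow_neg (abs_nonneg _), Finset.prod_mul_distrib, Finset.prod_inv_distrib]
        field_simp

theorem integrable_exp_neg_norm_div_mul_sin_half_angle_single_rpow {b : ℝ} (hb0 : 0 < b)
    (hb2 : b < 2) :
    Integrable fun q : EuclideanSpace ℝ (Fin 3) =>
      exp (-‖q‖) / (‖q‖ ^ (2 + b / 2) * sin (angle (EuclideanSpace.single 2 1) q / 2) ^ b) := by
  have hG : Integrable fun q : EuclideanSpace ℝ (Fin 3) =>
      2 ^ b * ∏ i, (|q i| ^ (-(2 / 3 + b / 6)) * exp (-3⁻¹ * |q i|)) :=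
    (EuclideanSpace.integrable_prod_apply fun _ =>
      integrable_abs_rpow_mul_exp_neg_mul_abs (by linarith) (by norm_num)).const_mul _
  refine hG.mono' (Measurable.aestronglyMeasurable (by unfold angle; fun_prop)) ?_
  filter_upwards [ae_all_iff.2 fun i => EuclideanSpace.ae_apply_ne i 0] with q hq
  rw [norm_eq_abs, abs_of_nonneg (div_nonneg (exp_pos _).le (mul_nonneg
    (rpow_nonneg (norm_nonneg q) _) (rpow_nonneg (sin_half_angle_nonneg _ _) _)))]
  exact exp_neg_norm_div_le_prod hb0 hb2 hq

/-- For `0 < b < 1` and a fixed unit vector `u ∈ ℝ³`, the integral over `ℝ³` of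
`e^{-|q|}/(|q|^{2+b/2} sin^b(φ(q)/2))` is finite, where `φ(q)` is the angle between
`u` and `q`. -/
theorem stmt12 (b : ℝ) (hb : 0 < b) (hb1 : b < 1)
    (u : EuclideanSpace ℝ (Fin 3)) (hu : ‖u‖ = 1) :
    Integrable (fun q : EuclideanSpace ℝ (Fin 3) =>
      Real.exp (-‖q‖) /
        (‖q‖ ^ (2 + b / 2) * Real.sin (InnerProductGeometry.angle u q / 2) ^ b)) := by
  have hu' : ‖u‖ = ‖EuclideanSpace.single (2 : Fin 3) (1 : ℝ)‖ := by simp [hu]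
  exact (integrable_comp_norm_angle_iff hu'
    (fun r θ => exp (-r) / (r ^ (2 + b / 2) * sin (θ / 2) ^ b))).mpr
    (integrable_exp_neg_norm_div_mul_sin_half_angle_single_rpow hb (by linarith))
end

section
/- Let p, q ∈ R^3 and ω ∈ S², with ρ := sqrt(2(|p||q| − p·q)) > 0, ν := |p| + |q|, n := p + q. Define p' := n/2 + (ρ/2)(ω + ((n·ω) n)/(ρ(ν + ρ))) and q' := n/2 − (ρ/2)(ω + ((n·ω) n)/(ρ(ν + ρ))). Then p' + q' = p + q and |p'| = ν/2 + (n·ω)/2, |q'| = ν/2 − (n·ω)/2. -/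
/-!
Write `a = ⟪n, ω⟫`. Then `p' = c • n + (ρ / 2) • ω` with `c (ν + ρ) = (ν + ρ + a) / 2`, and
expanding `‖p'‖²` with `‖n‖² = ν² - ρ² = (ν - ρ)(ν + ρ)` collapses it to `((ν + a) / 2)²`.
Since `|a| ≤ ‖n‖ ≤ ν`, the base is nonnegative, so `‖p'‖ = (ν + a) / 2`. The momentum `q'`
is `p'` with `ω` replaced by `-ω`, which flips the sign of `a`.
-/

open RealInnerProductSpace

variable {E : Type*} [NormedAddCommGroup E] [InnerProductSpace ℝ E]

noncomputable def postCollisionMomentum (n ω : E) (ρ ν : ℝ) : E :=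
  (1 / 2 : ℝ) • n + (ρ / 2) • (ω + (⟪n, ω⟫ / (ρ * (ν + ρ))) • n)

theorem postCollisionMomentum_neg (n ω : E) (ρ ν : ℝ) :
    postCollisionMomentum n (-ω) ρ ν =
      (1 / 2 : ℝ) • n - (ρ / 2) • (ω + (⟪n, ω⟫ / (ρ * (ν + ρ))) • n) := by
  rw [postCollisionMomentum, inner_neg_right, neg_div, neg_smul, ← neg_add, smul_neg,
    sub_eq_add_neg]

theorem norm_sq_postCollisionMomentum {n ω : E} {ρ ν : ℝ} (hω : ‖ω‖ = 1)
    (hn : ‖n‖ ^ 2 = ν ^ 2 - ρ ^ 2) (hρ : ρ ≠ 0) (hνρ : ν + ρ ≠ 0) :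
    ‖postCollisionMomentum n ω ρ ν‖ ^ 2 = (ν / 2 + ⟪n, ω⟫ / 2) ^ 2 := by
  rw [← real_inner_self_eq_norm_sq] at hn ⊢
  have hωω : ⟪ω, ω⟫ = 1 := by rw [real_inner_self_eq_norm_sq, hω, one_pow]
  simp only [postCollisionMomentum, inner_add_left, inner_add_right, real_inner_smul_left,
    real_inner_smul_right, real_inner_comm n ω, hn, hωω]
  field_simp
  ring

theorem norm_postCollisionMomentum {n ω : E} {ρ ν : ℝ} (hω : ‖ω‖ = 1)
    (hn : ‖n‖ ^ 2 = ν ^ 2 - ρ ^ 2) (hρ : 0 < ρ) (hν : 0 ≤ ν) :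
    ‖postCollisionMomentum n ω ρ ν‖ = ν / 2 + ⟪n, ω⟫ / 2 := by
  have hn_le : ‖n‖ ≤ ν := by nlinarith [norm_nonneg n]
  have hinner : |⟪n, ω⟫| ≤ ν :=
    (abs_real_inner_le_norm n ω).trans (by rwa [hω, mul_one])
  refine (sq_eq_sq₀ (norm_nonneg _) ?_).mp
    (norm_sq_postCollisionMomentum hω hn hρ.ne' (by positivity))
  linarith [neg_abs_le ⟪n, ω⟫]

theorem sq_norm_add_eq_sq_add_sub (p q : E) :
    ‖p + q‖ ^ 2 = (‖p‖ + ‖q‖) ^ 2 - 2 * (‖p‖ * ‖q‖ - ⟪p, q⟫) := by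
  rw [norm_add_sq_real]
  ring

/-- The massless post-collision momentum parametrization conserves the total momentum, and
the norms of the post-collision momenta are `ν/2 ± (n·ω)/2`, where `ν = |p|+|q|`,
`n = p+q`, `ρ = √(2(|p||q| - p·q))`. -/
theorem stmt17 (p q ω : EuclideanSpace ℝ (Fin 3)) (hω : ‖ω‖ = 1)
    (ρ ν : ℝ) (n : EuclideanSpace ℝ (Fin 3))
    (hρdef : ρ = Real.sqrt (2 * (‖p‖ * ‖q‖ - (inner ℝ p q : ℝ)))) (hρ : 0 < ρ)
    (hν : ν = ‖p‖ + ‖q‖) (hn : n = p + q)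
    (p' q' : EuclideanSpace ℝ (Fin 3))
    (hp' : p' = (1 / 2 : ℝ) • n +
      (ρ / 2) • (ω + (((inner ℝ n ω : ℝ)) / (ρ * (ν + ρ))) • n))
    (hq' : q' = (1 / 2 : ℝ) • n -
      (ρ / 2) • (ω + (((inner ℝ n ω : ℝ)) / (ρ * (ν + ρ))) • n)) :
    p' + q' = p + q ∧
    ‖p'‖ = ν / 2 + (inner ℝ n ω : ℝ) / 2 ∧
    ‖q'‖ = ν / 2 - (inner ℝ n ω : ℝ) / 2 := by
  have hρsq : ρ ^ 2 = 2 * (‖p‖ * ‖q‖ - ⟪p, q⟫) := by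
    rw [hρdef, Real.sq_sqrt (by linarith [real_inner_le_norm p q])]
  have hnorm_n : ‖n‖ ^ 2 = ν ^ 2 - ρ ^ 2 := by
    rw [hn, hν, hρsq, sq_norm_add_eq_sq_add_sub]
  have hν_nonneg : 0 ≤ ν := hν ▸ by positivity
  rw [← postCollisionMomentum] at hp'
  rw [← postCollisionMomentum_neg] at hq'
  refine ⟨?_, ?_, ?_⟩
  · rw [hp', hq', postCollisionMomentum_neg, postCollisionMomentum, ← hn]
    module
  · rw [hp', norm_postCollisionMomentum hω hnorm_n hρ hν_nonneg]
  · rw [hq', norm_postCollisionMomentum (by rwa [norm_neg]) hnorm_n hρ hν_nonneg,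
      inner_neg_right, neg_div, sub_eq_add_neg]
end
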